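/- arXiv:2006.03989 — 2 statements merged into one kernel-verified Lean document; each statement's English description precedes it below -/
import Mathlib

section
/- (Theorem 7(ii), derivative consistency, deterministic core.) Let s* ≤ 1 with s* ≠ 0, let F be a non-degenerate bi-s*-concave distribution function, and let K be a compact subinterval of J(F). Let (L_n) and (U_n) be sequences of nondecreasing functions ℝ → [0,1] such that for every x ∈ ℝ, L_n(x) → F(x) and U_n(x) → F(x) as n → ∞. Then for every ε > 0 there exists N such that for all n ≥ N and every bi-s*-concave distribution function G with L_n ≤ G ≤ U_n pointwise on ℝ, one has K ⊆ J(G) and sup_{x ∈ K} | (G^{s*})′(x) − (F^{s*})′(x) | ≤ ε, where (G^{s*})′(x) = s* G(x)^{s*−1} G′(x) and (F^{s*})′(x) = s* F(x)^{s*−1} F′(x) (these derivatives exist on K by the characterization theorem). -/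
open Set MeasureTheory Filter
open scoped NNReal ENNReal

/-- A (cumulative) distribution function on `ℝ`: nondecreasing, `[0,1]`-valued,
right-continuous, with limit `0` at `-∞` and `1` at `+∞`. -/
def IsDistFun (F : ℝ → ℝ) : Prop :=
  Monotone F ∧ (∀ x, 0 ≤ F x ∧ F x ≤ 1) ∧
  (∀ x, ContinuousWithinAt F (Ici x) x) ∧
  Tendsto F atBot (nhds 0) ∧ Tendsto F atTop (nhds 1)

/-- `F` is non-degenerate: it takes a value strictly between 0 and 1. -/
def NonDeg (F : ℝ → ℝ) : Prop := ∃ x, 0 < F x ∧ F x < 1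

/-- `J(F) = {x : 0 < F x < 1}`. -/
def JSet (F : ℝ → ℝ) : Set ℝ := {x | 0 < F x ∧ F x < 1}

/-- `F` is bi-`s*`-concave: `F` is continuous on `ℝ` and, on `J(F)`,
for `s* < 0` both `F ^ s*` and `(1 - F) ^ s*` are convex; for `s* = 0` both
`log F` and `log (1 - F)` are concave; for `s* > 0` both `F ^ s*` and
`(1 - F) ^ s*` are concave. -/
def IsBiSStarConcave (s : ℝ) (F : ℝ → ℝ) : Prop :=
  Continuous F ∧
  (s < 0 → ConvexOn ℝ (JSet F) (fun x => F x ^ s) ∧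
    ConvexOn ℝ (JSet F) (fun x => (1 - F x) ^ s)) ∧
  (s = 0 → ConcaveOn ℝ (JSet F) (fun x => Real.log (F x)) ∧
    ConcaveOn ℝ (JSet F) (fun x => Real.log (1 - F x))) ∧
  (0 < s → ConcaveOn ℝ (JSet F) (fun x => F x ^ s) ∧
    ConcaveOn ℝ (JSet F) (fun x => (1 - F x) ^ s))

/-!
For `s ≠ 0`, bi-`s`-concavity of `G` says that `-G^s/s` and `-(1-G)^s/s` are convex on `J(G)`.
Since `G = (-s t)^(1/s)` at `t = -G^s/s` is a decreasing function of a convex function, its right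
derivative is at most its left derivative; `1 - G` gives the reverse inequality, so `G` is
differentiable on `J(G)`.

Monotone functions converging pointwise to a continuous limit converge uniformly on compacts, so
a sandwiched `G` is uniformly close to `F`, and then `-G^s/s` to `-F^s/s`, on an interval
`[a, b] ⊆ J(F)` whose interior contains `K`. For convex `f` and `g` that are `η`-close,
`g'(x) ≤ slope g x (x+h) ≤ slope f x (x+h) + 2η/h ≤ f'(x+h) + 2η/h`, and symmetrically from below;
`f'` is continuous, hence uniformly continuous on `[a, b]`, and choosing `h` and then `η` small
bounds `|g'(x) - f'(x)|` uniformly on `K`.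
-/

open scoped Topology

theorem IsOpen.exists_Icc_subset_of_ordConnected {U : Set ℝ} {k₁ k₂ : ℝ} (hU : IsOpen U)
    (hU' : U.OrdConnected) (h₁ : k₁ ∈ U) (h₂ : k₂ ∈ U) :
    ∃ a b, a < k₁ ∧ k₂ < b ∧ Icc a b ⊆ U := by
  obtain ⟨a, haU, ha⟩ := (((hU.eventually_mem h₁).filter_mono nhdsWithin_le_nhds).and
    (self_mem_nhdsWithin (s := Iio k₁))).exists
  obtain ⟨b, hbU, hb⟩ := (((hU.eventually_mem h₂).filter_mono nhdsWithin_le_nhds).and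
    (self_mem_nhdsWithin (s := Ioi k₂))).exists
  exact ⟨a, b, ha, hb, hU'.out haU hbU⟩

theorem tendstoUniformlyOn_of_forall_monotone {ι : Type*} {l : Filter ι} [l.NeBot] {L : ι → ℝ → ℝ}
    {F : ℝ → ℝ} {K : Set ℝ} (hK : IsCompact K) (hL : ∀ i, Monotone (L i)) (hF : Continuous F)
    (hLF : ∀ x, Tendsto (fun i => L i x) l (𝓝 (F x))) : TendstoUniformlyOn L F l K := by
  have hFmono : Monotone F := fun x y hxy =>
    le_of_tendsto_of_tendsto' (hLF x) (hLF y) fun i => hL i hxy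
  rw [Metric.tendstoUniformlyOn_iff]
  intro ε hε
  have hstep : ∀ x, ∃ t > 0, F (x + t) - F (x - t) < ε / 2 := by
    intro x
    have hcont : Tendsto (fun t => F (x + t) - F (x - t)) (𝓝 0) (𝓝 0) := by
      have : Continuous fun t => F (x + t) - F (x - t) := by fun_prop
      simpa using this.tendsto 0
    obtain ⟨t, htF, ht⟩ := (((hcont.eventually (eventually_lt_nhds (half_pos hε))).filter_mono
      nhdsWithin_le_nhds).and (self_mem_nhdsWithin (s := Ioi 0))).exists
    exact ⟨t, ht, htF⟩
  choose t ht htF using hstep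
  obtain ⟨c, -, hKc⟩ := hK.elim_nhds_subcover (fun x => Ioo (x - t x) (x + t x))
    fun x _ => Ioo_mem_nhds (by linarith [ht x]) (by linarith [ht x])
  have hclose : ∀ y, ∀ᶠ i in l, |L i y - F y| < ε / 2 := fun y =>
    (Metric.tendsto_nhds.mp (hLF y)) _ (half_pos hε)
  filter_upwards [(eventually_all_finset c).2 fun x _ => (hclose (x - t x)).and (hclose (x + t x))]
    with i hi y hy
  obtain ⟨x, hxc, hyx⟩ := mem_iUnion₂.mp (hKc hy)
  obtain ⟨hl, hr⟩ := hi x hxc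
  rw [abs_lt] at hl hr
  rw [Real.dist_eq, abs_lt]
  constructor <;> linarith [htF x, hFmono hyx.1.le, hFmono hyx.2.le, hL i hyx.1.le, hL i hyx.2.le]

namespace ConvexOn

variable {S : Set ℝ} {f : ℝ → ℝ}

theorem continuousOn_deriv (hf : ConvexOn ℝ S f) (hS : IsOpen S)
    (hd : ∀ y ∈ S, DifferentiableAt ℝ f y) : ContinuousOn (deriv f) S := by
  intro x hx
  have hfx : ContinuousAt f x := (hd x hx).continuousAt
  obtain ⟨hleft, hright⟩ := hasDerivAt_iff_tendsto_slope_left_right.mp (hd x hx).hasDerivAt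
  refine ContinuousAt.continuousWithinAt (tendsto_order.2 ⟨fun c hc => ?_, fun c hc => ?_⟩)
  · obtain ⟨w, hwc, hwS, hwx⟩ := ((hleft.eventually (eventually_gt_nhds hc)).and
      (((hS.eventually_mem hx).filter_mono nhdsWithin_le_nhds).and self_mem_nhdsWithin)).exists
    have hslope : ContinuousAt (slope f w) x := by
      simp only [slope_fun_def_field]
      exact (hfx.sub continuousAt_const).div (continuousAt_id.sub continuousAt_const)
        (sub_ne_zero.2 (ne_of_gt hwx))
    rw [slope_comm] at hwc
    filter_upwards [hslope.eventually (eventually_gt_nhds hwc), hS.mem_nhds hx,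
      eventually_gt_nhds hwx] with y hcy hyS hwy
    exact hcy.trans_le (hf.slope_le_deriv hwS hyS hwy (hd y hyS))
  · obtain ⟨z, hzc, hzS, hxz⟩ := ((hright.eventually (eventually_lt_nhds hc)).and
      (((hS.eventually_mem hx).filter_mono nhdsWithin_le_nhds).and self_mem_nhdsWithin)).exists
    have hslope : ContinuousAt (fun y => slope f y z) x := by
      simp only [slope_def_field]
      exact (continuousAt_const.sub hfx).div (continuousAt_const.sub continuousAt_id)
        (sub_ne_zero.2 (ne_of_gt hxz))
    filter_upwards [hslope.eventually (eventually_lt_nhds hzc), hS.mem_nhds hx,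
      eventually_lt_nhds hxz] with y hcy hyS hyz
    exact (hf.deriv_le_slope hyS hzS hyz (hd y hyS)).trans_lt hcy

theorem deriv_le_deriv_add_of_abs_sub_le {g : ℝ → ℝ} {x y η : ℝ} (hf : ConvexOn ℝ S f)
    (hg : ConvexOn ℝ S g) (hx : x ∈ S) (hy : y ∈ S) (hxy : x < y)
    (hfd : DifferentiableAt ℝ f x) (hgd : DifferentiableAt ℝ g y)
    (hηx : |f x - g x| ≤ η) (hηy : |f y - g y| ≤ η) :
    deriv f x ≤ deriv g y + 2 * η / (y - x) := by
  have hslope : slope f x y ≤ slope g x y + 2 * η / (y - x) := by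
    rw [slope_def_field, slope_def_field, ← add_div]
    obtain ⟨hx₁, -⟩ := abs_le.mp hηx
    obtain ⟨-, hy₂⟩ := abs_le.mp hηy
    gcongr
    linarith
  linarith [hf.deriv_le_slope hx hy hxy hfd, hg.slope_le_deriv hx hy hxy hgd]

theorem exists_abs_deriv_sub_le {a b k₁ k₂ ε : ℝ} (hf : ConvexOn ℝ (Icc a b) f)
    (hfd : ∀ y ∈ Icc a b, DifferentiableAt ℝ f y) (hf' : ContinuousOn (deriv f) (Icc a b))
    (ha : a < k₁) (hb : k₂ < b) (hε : 0 < ε) :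
    ∃ η > 0, ∀ g : ℝ → ℝ, ConvexOn ℝ (Icc a b) g → (∀ y ∈ Icc a b, |g y - f y| ≤ η) →
      ∀ x ∈ Icc k₁ k₂, DifferentiableAt ℝ g x → |deriv g x - deriv f x| ≤ ε := by
  obtain ⟨δ, hδ, hf'δ⟩ := Metric.uniformContinuousOn_iff_le.mp
    (isCompact_Icc.uniformContinuousOn_of_continuous hf') (ε / 2) (by positivity)
  set h := min δ (min (k₁ - a) (b - k₂))
  have hh : 0 < h := lt_min hδ (lt_min (by linarith) (by linarith))
  have hhδ : h ≤ δ := min_le_left _ _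
  have hha : h ≤ k₁ - a := (min_le_right _ _).trans (min_le_left _ _)
  have hhb : h ≤ b - k₂ := (min_le_right _ _).trans (min_le_right _ _)
  refine ⟨ε * h / 4, by positivity, fun g hg hgf x hx hgd => ?_⟩
  have hx₀ : x ∈ Icc a b := ⟨by linarith [hx.1], by linarith [hx.2]⟩
  have hxr : x + h ∈ Icc a b := ⟨by linarith [hx.1], by linarith [hx.2]⟩
  have hxl : x - h ∈ Icc a b := ⟨by linarith [hx.1], by linarith [hx.2]⟩
  have hupper := hg.deriv_le_deriv_add_of_abs_sub_le hf hx₀ hxr (by linarith) hgd (hfd _ hxr)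
    (hgf x hx₀) (hgf _ hxr)
  have hlower := hf.deriv_le_deriv_add_of_abs_sub_le hg hxl hx₀ (by linarith) (hfd _ hxl) hgd
    ((abs_sub_comm _ _).trans_le (hgf _ hxl)) ((abs_sub_comm _ _).trans_le (hgf x hx₀))
  have hstep : 2 * (ε * h / 4) / h = ε / 2 := by field_simp; ring
  rw [add_sub_cancel_left, hstep] at hupper
  rw [sub_sub_cancel, hstep] at hlower
  have hr := hf'δ _ hxr _ hx₀ (by rw [Real.dist_eq, add_sub_cancel_left, abs_of_pos hh]; exact hhδ)
  have hl := hf'δ _ hx₀ _ hxl (by rw [Real.dist_eq, sub_sub_cancel, abs_of_pos hh]; exact hhδ)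
  rw [Real.dist_eq, abs_le] at hr hl
  rw [abs_le]
  constructor <;> linarith [hr.2, hl.2]

theorem exists_hasDerivWithinAt_Ioi_le_Iio_of_eventuallyEq_comp {p H : ℝ → ℝ} {x c : ℝ}
    (hf : ConvexOn ℝ S f) (hx : x ∈ interior S) (hp : HasDerivAt p c (f x)) (hc : c ≤ 0)
    (hH : H =ᶠ[𝓝 x] p ∘ f) :
    ∃ dl dr, HasDerivWithinAt H dl (Iio x) x ∧ HasDerivWithinAt H dr (Ioi x) x ∧ dr ≤ dl :=
  ⟨_, _, (hp.comp_hasDerivWithinAt x (hf.hasDerivWithinAt_leftDeriv_of_mem_interior hx))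
      |>.congr_of_eventuallyEq (nhdsWithin_le_nhds hH) hH.eq_of_nhds,
    (hp.comp_hasDerivWithinAt x (hf.hasDerivWithinAt_rightDeriv_of_mem_interior hx))
      |>.congr_of_eventuallyEq (nhdsWithin_le_nhds hH) hH.eq_of_nhds,
    mul_le_mul_of_nonpos_left (hf.leftDeriv_le_rightDeriv_of_mem_interior hx) hc⟩

end ConvexOn

theorem convexOn_neg_div_of_convexOn_of_concaveOn {S : Set ℝ} {u : ℝ → ℝ} {s : ℝ} (hs : s ≠ 0)
    (hneg : s < 0 → ConvexOn ℝ S u) (hpos : 0 < s → ConcaveOn ℝ S u) :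
    ConvexOn ℝ S fun x => -u x / s := by
  rcases hs.lt_or_gt with h | h
  · have hu : (fun x => -u x / s) = fun x => (-s⁻¹) • u x := by
      ext x; rw [smul_eq_mul]; ring
    exact hu ▸ (hneg h).smul (by simpa using h.le)
  · have hu : (fun x => -u x / s) = fun x => s⁻¹ • (-u) x := by
      ext x; rw [smul_eq_mul, Pi.neg_apply]; ring
    exact hu ▸ (hpos h).neg.smul (by positivity)

theorem exists_hasDerivWithinAt_Ioi_le_Iio_of_convexOn_neg_rpow_div {S : Set ℝ} {H : ℝ → ℝ}
    {s x : ℝ} (hs : s ≠ 0) (hS : IsOpen S) (hH : ∀ y ∈ S, 0 < H y)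
    (hconv : ConvexOn ℝ S fun y => -H y ^ s / s) (hx : x ∈ S) :
    ∃ dl dr, HasDerivWithinAt H dl (Iio x) x ∧ HasDerivWithinAt H dr (Ioi x) x ∧ dr ≤ dl := by
  have hrpow : ∀ y, -s * (-H y ^ s / s) = H y ^ s := fun y => by field_simp
  have hp := ((hasDerivAt_id' (-H x ^ s / s)).const_mul (-s)).rpow_const (p := s⁻¹)
    (Or.inl (by rw [hrpow]; exact (Real.rpow_pos_of_pos (hH x hx) s).ne'))
  refine hconv.exists_hasDerivWithinAt_Ioi_le_Iio_of_eventuallyEq_comp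
    (by rwa [hS.interior_eq]) hp ?_ ?_
  · rw [show -s * 1 * s⁻¹ = -1 by field_simp, neg_one_mul, neg_nonpos, hrpow]
    exact Real.rpow_nonneg (Real.rpow_nonneg (hH x hx).le s) _
  · filter_upwards [hS.mem_nhds hx] with y hy
    rw [Function.comp_apply, hrpow, ← Real.rpow_mul (hH y hy).le, mul_inv_cancel₀ hs,
      Real.rpow_one]

theorem Monotone.exists_forall_abs_rpow_sub_le {F : ℝ → ℝ} {a b η : ℝ} (hF : Monotone F)
    (hab : a ≤ b) (hJ : Icc a b ⊆ JSet F) (s : ℝ) (hη : 0 < η) :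
    ∃ δ > 0, ∀ G : ℝ → ℝ, (∀ y ∈ Icc a b, |G y - F y| ≤ δ) →
      Icc a b ⊆ JSet G ∧ ∀ y ∈ Icc a b, |G y ^ s - F y ^ s| ≤ η := by
  have hFa : 0 < F a := (hJ ⟨le_rfl, hab⟩).1
  have hFb : F b < 1 := (hJ ⟨hab, le_rfl⟩).2
  have hcont : ContinuousOn (fun t : ℝ => t ^ s) (Icc (F a / 2) ((1 + F b) / 2)) :=
    continuousOn_id.rpow_const fun t ht => Or.inl (by linarith [ht.1] : (0 : ℝ) < t).ne'
  obtain ⟨ρ, hρ, hρη⟩ := Metric.uniformContinuousOn_iff_le.mp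
    (isCompact_Icc.uniformContinuousOn_of_continuous hcont) η hη
  set δ := min ρ (min (F a / 2) ((1 - F b) / 2))
  have hδ : 0 < δ := lt_min hρ (lt_min (by linarith) (by linarith))
  have hδρ : δ ≤ ρ := min_le_left _ _
  have hδa : δ ≤ F a / 2 := (min_le_right _ _).trans (min_le_left _ _)
  have hδb : δ ≤ (1 - F b) / 2 := (min_le_right _ _).trans (min_le_right _ _)
  have hmem : ∀ y ∈ Icc a b, ∀ t, |t - F y| ≤ δ → t ∈ Icc (F a / 2) ((1 + F b) / 2) :=
    fun y hy t ht => ⟨by linarith [(abs_le.mp ht).1, hF hy.1],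
      by linarith [(abs_le.mp ht).2, hF hy.2]⟩
  refine ⟨δ, hδ, fun G hGF => ⟨fun y hy => ?_, fun y hy => ?_⟩⟩
  · have hGy := hmem y hy _ (hGF y hy)
    exact ⟨by linarith [hGy.1], by linarith [hGy.2]⟩
  · have hFy := hmem y hy (F y) (by rw [sub_self, abs_zero]; exact hδ.le)
    exact hρη _ (hmem y hy _ (hGF y hy)) _ hFy ((hGF y hy).trans hδρ)

namespace IsBiSStarConcave

variable {s : ℝ} {G : ℝ → ℝ}

theorem isOpen_JSet (hG : IsBiSStarConcave s G) : IsOpen (JSet G) :=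
  isOpen_Ioo.preimage hG.1

theorem convexOn_neg_rpow_div (hs : s ≠ 0) (hG : IsBiSStarConcave s G) :
    ConvexOn ℝ (JSet G) (fun x => -G x ^ s / s) ∧
      ConvexOn ℝ (JSet G) (fun x => -(1 - G x) ^ s / s) :=
  ⟨convexOn_neg_div_of_convexOn_of_concaveOn hs (fun h => (hG.2.1 h).1) fun h => (hG.2.2.2 h).1,
    convexOn_neg_div_of_convexOn_of_concaveOn hs (fun h => (hG.2.1 h).2) fun h => (hG.2.2.2 h).2⟩

theorem differentiableAt (hs : s ≠ 0) (hG : IsBiSStarConcave s G) {x : ℝ} (hx : x ∈ JSet G) :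
    DifferentiableAt ℝ G x := by
  obtain ⟨hφ, hψ⟩ := hG.convexOn_neg_rpow_div hs
  obtain ⟨dl, dr, hl, hr, hrl⟩ := exists_hasDerivWithinAt_Ioi_le_Iio_of_convexOn_neg_rpow_div
    hs hG.isOpen_JSet (fun y hy => hy.1) hφ hx
  obtain ⟨el, er, hel, her, hrel⟩ := exists_hasDerivWithinAt_Ioi_le_Iio_of_convexOn_neg_rpow_div
    hs hG.isOpen_JSet (fun y hy => sub_pos.2 hy.2) hψ hx
  have hdl : dl = -el := (uniqueDiffWithinAt_Iio x).eq_deriv _ hl (by simpa using hel.const_sub 1)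
  have hdr : dr = -er := (uniqueDiffWithinAt_Ioi x).eq_deriv _ hr (by simpa using her.const_sub 1)
  have hlr : dl = dr := le_antisymm (by linarith) hrl
  refine (hasDerivAt_iff_tendsto_slope_left_right.2 ⟨?_, ?_⟩).differentiableAt (f' := dl)
  · exact (hasDerivWithinAt_iff_tendsto_slope' self_notMem_Iio).1 hl
  · exact (hasDerivWithinAt_iff_tendsto_slope' self_notMem_Ioi).1 (hlr ▸ hr)

theorem hasDerivAt_neg_rpow_div (hs : s ≠ 0) (hG : IsBiSStarConcave s G) {x : ℝ}
    (hx : x ∈ JSet G) :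
    HasDerivAt (fun y => -G y ^ s / s) (-(G x ^ (s - 1) * deriv G x)) x := by
  have h : HasDerivAt (fun y => -G y ^ s / s) (-(deriv G x * s * G x ^ (s - 1)) / s) x :=
    ((hG.differentiableAt hs hx).hasDerivAt.rpow_const (p := s) (Or.inl hx.1.ne')).neg.div_const s
  convert h using 1
  field_simp

theorem exists_abs_deriv_rpow_sub_le {a b k₁ k₂ ε : ℝ} {F : ℝ → ℝ}
    (hs : s ≠ 0) (hF : IsBiSStarConcave s F) (hFmono : Monotone F) (hJ : Icc a b ⊆ JSet F)
    (ha : a < k₁) (hk : k₁ ≤ k₂) (hb : k₂ < b) (hε : 0 < ε) :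
    ∃ δ > 0, ∀ G : ℝ → ℝ, IsBiSStarConcave s G → (∀ y ∈ Icc a b, |G y - F y| ≤ δ) →
      Icc a b ⊆ JSet G ∧ ∀ x ∈ Icc k₁ k₂,
        |s * G x ^ (s - 1) * deriv G x - s * F x ^ (s - 1) * deriv F x| ≤ ε := by
  have hs' : 0 < |s| := abs_pos.2 hs
  have hφF := (hF.convexOn_neg_rpow_div hs).1
  have hφFd : ∀ y ∈ JSet F, DifferentiableAt ℝ (fun y => -F y ^ s / s) y := fun y hy =>
    (hF.hasDerivAt_neg_rpow_div hs hy).differentiableAt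
  obtain ⟨η, hη, hstab⟩ := (hφF.subset hJ (convex_Icc a b)).exists_abs_deriv_sub_le
    (fun y hy => hφFd y (hJ hy)) ((hφF.continuousOn_deriv hF.isOpen_JSet hφFd).mono hJ) ha hb
    (div_pos hε hs')
  obtain ⟨δ, hδ, hclose⟩ := hFmono.exists_forall_abs_rpow_sub_le (by linarith) hJ s
    (mul_pos hη hs')
  refine ⟨δ, hδ, fun G hG hGF => ?_⟩
  obtain ⟨hJG, hGFs⟩ := hclose G hGF
  refine ⟨hJG, fun x hx => ?_⟩
  have hxJ : x ∈ Icc a b := ⟨by linarith [hx.1], by linarith [hx.2]⟩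
  have hφG := hG.hasDerivAt_neg_rpow_div hs (hJG hxJ)
  have hderiv := hstab _ ((hG.convexOn_neg_rpow_div hs).1.subset hJG (convex_Icc a b))
    (fun y hy => by
      rw [show -G y ^ s / s - -F y ^ s / s = -(G y ^ s - F y ^ s) / s by ring, abs_div, abs_neg,
        div_le_iff₀ hs']
      exact hGFs y hy)
    x hx hφG.differentiableAt
  rw [hφG.deriv, (hF.hasDerivAt_neg_rpow_div hs (hJ hxJ)).deriv] at hderiv
  calc |s * G x ^ (s - 1) * deriv G x - s * F x ^ (s - 1) * deriv F x|
      = |s| * |-(G x ^ (s - 1) * deriv G x) - -(F x ^ (s - 1) * deriv F x)| := by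
        rw [← abs_mul, ← abs_neg]; ring_nf
    _ ≤ |s| * (ε / |s|) := by gcongr
    _ = ε := mul_div_cancel₀ _ hs'.ne'

end IsBiSStarConcave

theorem sandwiched_derivative_consistency_general
    (s : ℝ) (hs0 : s ≠ 0)
    (F : ℝ → ℝ) (hF : IsDistFun F)
    (hbi : IsBiSStarConcave s F)
    (k₁ k₂ : ℝ) (hk : k₁ ≤ k₂) (hK : Icc k₁ k₂ ⊆ JSet F)
    (L U : ℕ → ℝ → ℝ)
    (hLmono : ∀ n, Monotone (L n)) (hUmono : ∀ n, Monotone (U n))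
    (hLconv : ∀ x, Tendsto (fun n => L n x) atTop (nhds (F x)))
    (hUconv : ∀ x, Tendsto (fun n => U n x) atTop (nhds (F x))) :
    ∀ ε > (0 : ℝ), ∃ N : ℕ, ∀ n ≥ N,
      ∀ G : ℝ → ℝ, IsDistFun G → IsBiSStarConcave s G →
        (∀ x, L n x ≤ G x ∧ G x ≤ U n x) →
        Icc k₁ k₂ ⊆ JSet G ∧
        ∀ x ∈ Icc k₁ k₂,
          |s * G x ^ (s - 1) * deriv G x - s * F x ^ (s - 1) * deriv F x| ≤ ε := by
  intro ε hε
  obtain ⟨a, b, ha, hb, hJ⟩ := hbi.isOpen_JSet.exists_Icc_subset_of_ordConnected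
    (hbi.convexOn_neg_rpow_div hs0).1.1.ordConnected (hK ⟨le_rfl, hk⟩) (hK ⟨hk, le_rfl⟩)
  obtain ⟨δ, hδ, hδG⟩ := hbi.exists_abs_deriv_rpow_sub_le hs0 hF.1 hJ ha hk hb hε
  have hLunif : TendstoUniformlyOn L F atTop (Icc a b) :=
    tendstoUniformlyOn_of_forall_monotone isCompact_Icc hLmono hbi.1 hLconv
  have hUunif : TendstoUniformlyOn U F atTop (Icc a b) :=
    tendstoUniformlyOn_of_forall_monotone isCompact_Icc hUmono hbi.1 hUconv
  obtain ⟨N, hN⟩ := eventually_atTop.mp ((Metric.tendstoUniformlyOn_iff.mp hLunif δ hδ).and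
    (Metric.tendstoUniformlyOn_iff.mp hUunif δ hδ))
  refine ⟨N, fun n hn G _ hG hLGU => ?_⟩
  obtain ⟨hJG, hderiv⟩ := hδG G hG fun y hy => by
    have hL := (hN n hn).1 y hy
    have hU := (hN n hn).2 y hy
    rw [Real.dist_eq, abs_lt] at hL hU
    rw [abs_le]
    constructor <;> linarith [hLGU y]
  exact ⟨(Icc_subset_Icc ha.le hb.le).trans hJG, hderiv⟩

/-- Theorem 7(ii), derivative consistency, deterministic core: let `F` be a
non-degenerate bi-`s*`-concave distribution function (`s* ≤ 1`, `s* ≠ 0`), `K = [k₁, k₂]` a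
compact subinterval of `J(F)`, and `L n`, `U n` nondecreasing `[0,1]`-valued functions
converging pointwise to `F`. Then for every `ε > 0`, eventually every bi-`s*`-concave
distribution function `G` sandwiched between `L n` and `U n` satisfies `K ⊆ J(G)` and
`sup_{x ∈ K} |(G^{s*})'(x) - (F^{s*})'(x)| ≤ ε`. -/
theorem sandwiched_derivative_consistency
    (s : ℝ) (hs : s ≤ 1) (hs0 : s ≠ 0)
    (F : ℝ → ℝ) (hF : IsDistFun F) (hnd : NonDeg F)
    (hbi : IsBiSStarConcave s F)
    (k₁ k₂ : ℝ) (hk : k₁ ≤ k₂) (hK : Icc k₁ k₂ ⊆ JSet F)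
    (L U : ℕ → ℝ → ℝ)
    (hLmono : ∀ n, Monotone (L n)) (hUmono : ∀ n, Monotone (U n))
    (hL01 : ∀ n x, 0 ≤ L n x ∧ L n x ≤ 1) (hU01 : ∀ n x, 0 ≤ U n x ∧ U n x ≤ 1)
    (hLconv : ∀ x, Tendsto (fun n => L n x) atTop (nhds (F x)))
    (hUconv : ∀ x, Tendsto (fun n => U n x) atTop (nhds (F x))) :
    ∀ ε > (0 : ℝ), ∃ N : ℕ, ∀ n ≥ N,
      ∀ G : ℝ → ℝ, IsDistFun G → IsBiSStarConcave s G →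
        (∀ x, L n x ≤ G x ∧ G x ≤ U n x) →
        Icc k₁ k₂ ⊆ JSet G ∧
        ∀ x ∈ Icc k₁ k₂,
          |s * G x ^ (s - 1) * deriv G x - s * F x ^ (s - 1) * deriv F x| ≤ ε :=
  sandwiched_derivative_consistency_general s hs0 F hF hbi k₁ k₂ hk hK L U hLmono hUmono hLconv
    hUconv
end

section
/- (Corollary 8, deterministic core.) Let s* < 0 and let F be a non-degenerate bi-s*-concave distribution function. Let (L_n) and (U_n) be sequences of nondecreasing functions ℝ → [0,1] such that for every x ∈ ℝ, L_n(x) → F(x) and U_n(x) → F(x) as n → ∞, and define L_n^o(x) = inf{ H(x) : H ∈ P_{s*}, L_n ≤ H ≤ U_n pointwise } and U_n^o(x) = sup{ H(x) : H ∈ P_{s*}, L_n ≤ H ≤ U_n pointwise } (with L_n^o ≡ 1 and U_n^o ≡ 0 when this class is empty). Let φ : ℝ → ℝ be locally absolutely continuous with continuous derivative φ′ satisfying |φ′(x)| ≤ a |x|^{k−1} for all x ≠ 0, for some constants a > 0 and 0 < k < −1/s*. Then for all sufficiently large n, φ is integrable with respect to the Lebesgue–Stieltjes measure of every distribution function G with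 L_n^o ≤ G ≤ U_n^o, and sup{ | ∫ φ dG − ∫ φ dF | : G a distribution function with L_n^o ≤ G ≤ U_n^o pointwise } → 0 as n → ∞ (supremum over the empty class being 0). -/
open Set MeasureTheory Filter
open scoped NNReal ENNReal

/-- The shape-constrained lower band `L^o`: pointwise infimum of all bi-`s*`-concave
distribution functions fitting between `L` and `U` (equal to `1` when no such function
exists, since every fitting function is bounded by `1`). -/
noncomputable def refinedLower (s : ℝ) (L U : ℝ → ℝ) (x : ℝ) : ℝ :=
  sInf ({1} ∪ {y : ℝ | ∃ H : ℝ → ℝ, IsDistFun H ∧ IsBiSStarConcave s H ∧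
    (∀ z, L z ≤ H z ∧ H z ≤ U z) ∧ H x = y})

/-- The shape-constrained upper band `U^o`: pointwise supremum of all bi-`s*`-concave
distribution functions fitting between `L` and `U` (equal to `0` when no such function
exists, since every fitting function is bounded below by `0`). -/
noncomputable def refinedUpper (s : ℝ) (L U : ℝ → ℝ) (x : ℝ) : ℝ :=
  sSup ({0} ∪ {y : ℝ | ∃ H : ℝ → ℝ, IsDistFun H ∧ IsBiSStarConcave s H ∧
    (∀ z, L z ≤ H z ∧ H z ≤ U z) ∧ H x = y})

/-!
For `s* < 0`, convexity of `F ^ s*` and `(1 - F) ^ s*` forces the tails `F x` (as `x → -∞`) and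
`1 - F x` (as `x → ∞`) to decay like `|x| ^ (1/s*)`, with constants that depend only on bounds
for the values at two points `p < q` with `0 < F p < F q < 1`. Once `L n` and `U n` pin these
values, every bi-`s*`-concave fit between them, hence every `G` between the refined bands, is
dominated by one envelope `W x = min 1 (C (1 + |x|) ^ (1/s*))`, and `k < -1/s*` makes
`|φ'| W` integrable. Integration by parts,
`∫ φ dG = φ 0 + ∫_0^∞ φ' (1 - G) - ∫_{-∞}^0 φ' G`, then gives
`|∫ φ dG - ∫ φ dF| ≤ ∫ |φ'| |G - F| ≤ ∫ |φ'| min (|U n - F| + |F - L n|) W`,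
which tends to `0` by dominated convergence.
-/

lemma isProbabilityMeasure_of_measure_Iic {G : ℝ → ℝ} (hG : Tendsto G atTop (nhds 1))
    {μ : Measure ℝ} (hμ : ∀ x, μ (Iic x) = ENNReal.ofReal (G x)) : IsProbabilityMeasure μ := by
  refine ⟨tendsto_nhds_unique (tendsto_measure_Iic_atTop μ) ?_⟩
  simpa only [hμ, ENNReal.ofReal_one, Function.comp_def] using
    (ENNReal.continuous_ofReal.tendsto 1).comp hG

lemma measureReal_Iic_of_measure_Iic {G : ℝ → ℝ} {μ : Measure ℝ}
    (hμ : ∀ x, μ (Iic x) = ENNReal.ofReal (G x)) {t : ℝ}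
    (ht : 0 ≤ G t) : μ.real (Iic t) = G t := by
  rw [measureReal_def, hμ, ENNReal.toReal_ofReal ht]

lemma measureReal_Ioi_of_measure_Iic {G : ℝ → ℝ} {μ : Measure ℝ} [IsProbabilityMeasure μ]
    (hμ : ∀ x, μ (Iic x) = ENNReal.ofReal (G x)) {t : ℝ}
    (ht : 0 ≤ G t) : μ.real (Ioi t) = 1 - G t := by
  rw [← compl_Iic, measureReal_compl measurableSet_Iic, probReal_univ,
    measureReal_Iic_of_measure_Iic hμ ht]

noncomputable def signedTail (G : ℝ → ℝ) (t : ℝ) : ℝ := if 0 ≤ t then 1 - G t else -G t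

lemma abs_signedTail_of_nonneg {G : ℝ → ℝ} {t : ℝ} (hG : G t ≤ 1) (ht : 0 ≤ t) :
    |signedTail G t| = 1 - G t := by
  rw [signedTail, if_pos ht, abs_of_nonneg (sub_nonneg.2 hG)]

lemma abs_signedTail_of_neg {G : ℝ → ℝ} {t : ℝ} (hG : 0 ≤ G t) (ht : t < 0) :
    |signedTail G t| = G t := by
  rw [signedTail, if_neg (not_le.2 ht), abs_neg, abs_of_nonneg hG]

lemma abs_sub_le_of_abs_signedTail_le {F G : ℝ → ℝ} {t w : ℝ} (hF : 0 ≤ F t ∧ F t ≤ 1)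
    (hG : 0 ≤ G t ∧ G t ≤ 1) (hFw : |signedTail F t| ≤ w) (hGw : |signedTail G t| ≤ w) :
    |G t - F t| ≤ w := by
  rcases le_or_gt 0 t with ht | ht
  · rw [abs_signedTail_of_nonneg hF.2 ht] at hFw
    rw [abs_signedTail_of_nonneg hG.2 ht] at hGw
    simpa using abs_sub_le_of_nonneg_of_le (sub_nonneg.2 hF.2) hFw (sub_nonneg.2 hG.2) hGw
  · rw [abs_signedTail_of_neg hF.1 ht] at hFw
    rw [abs_signedTail_of_neg hG.1 ht] at hGw
    exact abs_sub_le_of_nonneg_of_le hG.1 hGw hF.1 hFw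

/-- `∫ f t * stepKernel x t dt = ∫ t in 0..x, f t` while
`∫ stepKernel x t dμ_G(x) = signedTail G t`, so Fubini applied to `φ' t * stepKernel x t`
gives the integration-by-parts formula. -/
noncomputable def stepKernel (x t : ℝ) : ℝ :=
  (Ico 0 x).indicator 1 t - (Ico x 0).indicator 1 t

lemma measurable_stepKernel : Measurable fun z : ℝ × ℝ => stepKernel z.1 z.2 := by
  unfold stepKernel
  refine (measurable_const.indicator ?_).sub (measurable_const.indicator ?_)
  · exact (measurableSet_le measurable_const measurable_snd).inter
      (measurableSet_lt measurable_snd measurable_fst)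
  · exact (measurableSet_le measurable_fst measurable_snd).inter
      (measurableSet_lt measurable_snd measurable_const)

lemma stepKernel_of_nonneg {t : ℝ} (ht : 0 ≤ t) (x : ℝ) :
    stepKernel x t = (Ioi t).indicator 1 x := by
  by_cases hx : t < x <;> simp [stepKernel, Set.indicator, ht, hx, not_lt.2 ht]

lemma stepKernel_of_neg {t : ℝ} (ht : t < 0) (x : ℝ) :
    stepKernel x t = -(Iic t).indicator 1 x := by
  by_cases hx : x ≤ t <;> simp [stepKernel, Set.indicator, ht, hx, not_le.2 ht]

section StepKernel

variable {G : ℝ → ℝ} {μ : Measure ℝ} [IsProbabilityMeasure μ]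

lemma integral_stepKernel_left (hG : ∀ x, 0 ≤ G x ∧ G x ≤ 1)
    (hμ : ∀ x, μ (Iic x) = ENNReal.ofReal (G x)) (t : ℝ) :
    ∫ x, stepKernel x t ∂μ = signedTail G t := by
  rcases le_or_gt 0 t with ht | ht
  · simp_rw [stepKernel_of_nonneg ht]
    rw [integral_indicator_one measurableSet_Ioi, measureReal_Ioi_of_measure_Iic hμ (hG t).1,
      signedTail, if_pos ht]
  · simp_rw [stepKernel_of_neg ht]
    rw [integral_neg, integral_indicator_one measurableSet_Iic,
      measureReal_Iic_of_measure_Iic hμ (hG t).1, signedTail, if_neg (not_le.2 ht)]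

lemma integral_abs_stepKernel_left (hG : ∀ x, 0 ≤ G x ∧ G x ≤ 1)
    (hμ : ∀ x, μ (Iic x) = ENNReal.ofReal (G x)) (t : ℝ) :
    ∫ x, |stepKernel x t| ∂μ = |signedTail G t| := by
  have hind : ∀ (S : Set ℝ) x, |S.indicator (1 : ℝ → ℝ) x| = S.indicator 1 x :=
    fun S x => abs_of_nonneg (Set.indicator_nonneg (fun _ _ => zero_le_one) x)
  rcases le_or_gt 0 t with ht | ht
  · simp_rw [stepKernel_of_nonneg ht, hind]
    rw [integral_indicator_one measurableSet_Ioi, measureReal_Ioi_of_measure_Iic hμ (hG t).1,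
      abs_signedTail_of_nonneg (hG t).2 ht]
  · simp_rw [stepKernel_of_neg ht, abs_neg, hind]
    rw [integral_indicator_one measurableSet_Iic, measureReal_Iic_of_measure_Iic hμ (hG t).1,
      abs_signedTail_of_neg (hG t).1 ht]

end StepKernel

lemma integrable_stepKernel_left {μ : Measure ℝ} [IsFiniteMeasure μ] (t : ℝ) :
    Integrable (fun x => stepKernel x t) μ := by
  rcases le_or_gt 0 t with ht | ht
  · simp_rw [stepKernel_of_nonneg ht]
    exact (integrable_const 1).indicator measurableSet_Ioi
  · simp_rw [stepKernel_of_neg ht]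
    exact ((integrable_const 1).indicator measurableSet_Iic).neg

lemma integral_mul_stepKernel {f : ℝ → ℝ} (hf : Continuous f) (x : ℝ) :
    ∫ t, f t * stepKernel x t = ∫ t in (0 : ℝ)..x, f t := by
  have hIco : ∀ a b : ℝ, Integrable ((Ico a b).indicator f) :=
    fun a b => (integrable_indicator_iff measurableSet_Ico).2
      ((hf.integrableOn_Icc).mono_set Ico_subset_Icc_self)
  have hsplit : ∀ t,
      f t * stepKernel x t = (Ico 0 x).indicator f t - (Ico x 0).indicator f t := fun t => by
    simp only [stepKernel, mul_sub, Set.indicator_apply, Pi.one_apply, mul_ite, mul_one, mul_zero]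
  simp_rw [hsplit]
  rw [integral_sub (hIco 0 x) (hIco x 0), integral_indicator measurableSet_Ico,
    integral_indicator measurableSet_Ico, integral_Ico_eq_integral_Ioc,
    integral_Ico_eq_integral_Ioc, intervalIntegral]

theorem integrable_and_integral_eq_add_integral_deriv_mul_signedTail {G φ φ' : ℝ → ℝ}
    {μ : Measure ℝ} [IsProbabilityMeasure μ] (hG : ∀ x, 0 ≤ G x ∧ G x ≤ 1)
    (hμ : ∀ x, μ (Iic x) = ENNReal.ofReal (G x))
    (hφ : ∀ x, HasDerivAt φ (φ' x) x) (hφ' : Continuous φ')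
    (hint : Integrable fun t => φ' t * signedTail G t) :
    Integrable φ μ ∧ ∫ x, φ x ∂μ = φ 0 + ∫ t, φ' t * signedTail G t := by
  have hKint :
      Integrable (Function.uncurry fun x t => φ' t * stepKernel x t) (μ.prod volume) := by
    refine (integrable_prod_iff' ((hφ'.measurable.comp measurable_snd).mul
      measurable_stepKernel).aestronglyMeasurable).2 ⟨ae_of_all _ fun t =>
        (integrable_stepKernel_left t).const_mul (φ' t), ?_⟩
    simp only [Pi.mul_apply, Function.comp_apply, norm_mul, Real.norm_eq_abs, integral_const_mul,
      integral_abs_stepKernel_left hG hμ]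
    simpa only [abs_mul] using hint.abs
  have hFTC : ∀ x, ∫ t, φ' t * stepKernel x t = φ x - φ 0 := fun x => by
    rw [integral_mul_stepKernel hφ' x, intervalIntegral.integral_eq_sub_of_hasDerivAt
      (fun t _ => hφ t) (hφ'.intervalIntegrable _ _)]
  have hφint : Integrable φ μ := by
    have h := hKint.integral_prod_left
    simp only [Function.uncurry_apply_pair, hFTC] at h
    exact (h.add (integrable_const (φ 0))).congr (ae_of_all _ fun x => sub_add_cancel _ _)
  refine ⟨hφint, ?_⟩
  have hswap := integral_integral_swap hKint
  simp only [hFTC, integral_const_mul, integral_stepKernel_left hG hμ,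
    integral_sub hφint (integrable_const _), integral_const, probReal_univ, one_smul] at hswap
  linarith

lemma exists_mul_one_add_abs_le {A B : ℝ} (hA : 0 < A) (hB : 0 < B) (p : ℝ) :
    ∃ b > 0, ∀ x ≤ p, b * (1 + |x|) ≤ A + B * (p - x) := by
  refine ⟨min (A / (1 + |p|)) B, by positivity, fun x hx => ?_⟩
  have hxp : |x| ≤ |p| + (p - x) := by
    have := abs_sub_abs_le_abs_sub x p
    rw [abs_sub_comm, abs_of_nonneg (sub_nonneg.2 hx)] at this
    linarith
  calc min (A / (1 + |p|)) B * (1 + |x|)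
      ≤ min (A / (1 + |p|)) B * (1 + |p|) + min (A / (1 + |p|)) B * (p - x) := by
        rw [← mul_add]; exact mul_le_mul_of_nonneg_left (by linarith) (by positivity)
    _ ≤ A / (1 + |p|) * (1 + |p|) + B * (p - x) :=
        add_le_add (mul_le_mul_of_nonneg_right (min_le_left _ _) (by positivity))
          (mul_le_mul_of_nonneg_right (min_le_right _ _) (sub_nonneg.2 hx))
    _ = A + B * (p - x) := by rw [div_mul_cancel₀ _ (by positivity)]

lemma exists_left_tail_bound {s p q α β : ℝ} (hs : s < 0) (hpq : p < q) (hα : 0 < α)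
    (hαβ : α < β) :
    ∃ C, ∀ H : ℝ → ℝ, Monotone H → (∀ x, 0 ≤ H x ∧ H x ≤ 1) →
      ConvexOn ℝ (JSet H) (fun x => H x ^ s) → H p ≤ α → β ≤ H q → H q < 1 →
        ∀ x ≤ p, H x ≤ C * (1 + |x|) ^ s⁻¹ := by
  have hc : 0 < α ^ s - β ^ s := sub_pos.2 (Real.rpow_lt_rpow_of_neg hα hαβ hs)
  obtain ⟨b, hb, hbound⟩ :=
    exists_mul_one_add_abs_le (Real.rpow_pos_of_pos hα s) (div_pos hc (sub_pos.2 hpq)) p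
  refine ⟨b ^ s⁻¹, fun H hmono h01 hconv hHp hHq hHq1 x hx => ?_⟩
  rcases (h01 x).1.eq_or_lt with hx0 | hx0
  · rw [← hx0]; positivity
  have hHp0 : 0 < H p := hx0.trans_le (hmono hx)
  -- a convex function lies above the extension of each of its chords
  have hchord : H p ^ s + (H p ^ s - H q ^ s) / (q - p) * (p - x) ≤ H x ^ s := by
    rcases hx.eq_or_lt with rfl | hxp
    · simp
    have hslope := hconv.slope_mono_adjacent (y := p)
      ⟨hx0, (hmono hx).trans_lt ((hHp.trans_lt hαβ).trans_le (hHq.trans hHq1.le))⟩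
      ⟨hα.trans (hαβ.trans_le hHq), hHq1⟩ hxp hpq
    rw [div_le_iff₀ (sub_pos.2 hxp)] at hslope
    rw [show (H p ^ s - H q ^ s) / (q - p) = -((H q ^ s - H p ^ s) / (q - p)) by ring]
    linarith
  have hkey : b * (1 + |x|) ≤ H x ^ s := by
    refine (hbound x hx).trans (le_trans ?_ hchord)
    have hHps : α ^ s ≤ H p ^ s := Real.rpow_le_rpow_of_nonpos hHp0 hHp hs.le
    have hHqs : H q ^ s ≤ β ^ s := Real.rpow_le_rpow_of_nonpos (hα.trans hαβ) hHq hs.le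
    gcongr ?_ + (?_ - ?_) / (q - p) * (p - x)
  calc H x = (H x ^ s) ^ s⁻¹ := (Real.rpow_rpow_inv hx0.le hs.ne).symm
    _ ≤ (b * (1 + |x|)) ^ s⁻¹ :=
        Real.rpow_le_rpow_of_nonpos (by positivity) hkey (inv_nonpos.2 hs.le)
    _ = b ^ s⁻¹ * (1 + |x|) ^ s⁻¹ := Real.mul_rpow hb.le (by positivity)

lemma exists_right_tail_bound {s p q α β : ℝ} (hs : s < 0) (hpq : p < q) (hαβ : α < β)
    (hβ : β < 1) :
    ∃ C, ∀ H : ℝ → ℝ, Monotone H → (∀ x, 0 ≤ H x ∧ H x ≤ 1) →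
      ConvexOn ℝ (JSet H) (fun x => (1 - H x) ^ s) → 0 < H p → H p ≤ α → β ≤ H q →
        ∀ x, q ≤ x → 1 - H x ≤ C * (1 + |x|) ^ s⁻¹ := by
  obtain ⟨C, hC⟩ :=
    exists_left_tail_bound hs (neg_lt_neg hpq) (sub_pos.2 hβ) (sub_lt_sub_left hαβ 1)
  refine ⟨C, fun H hmono h01 hconv hHp0 hHp hHq x hx => ?_⟩
  have hJ : JSet (fun y => 1 - H (-y)) = (-LinearMap.id : ℝ →ₗ[ℝ] ℝ) ⁻¹' JSet H := by
    ext y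
    simp only [JSet, mem_ofPred_eq, mem_preimage, LinearMap.neg_apply, LinearMap.id_apply]
    constructor <;> rintro ⟨h1, h2⟩ <;> constructor <;> linarith
  have hconv' : ConvexOn ℝ (JSet fun y => 1 - H (-y)) (fun y => (1 - H (-y)) ^ s) := by
    rw [hJ]; exact hconv.comp_linearMap _
  simpa using hC (fun y => 1 - H (-y)) (fun a b hab => by linarith [hmono (neg_le_neg hab)])
    (fun y => ⟨by linarith [(h01 (-y)).2], by linarith [(h01 (-y)).1]⟩) hconv'
    (by simp only [neg_neg]; linarith) (by simp only [neg_neg]; linarith) (by simpa using hHp0)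
    (-x) (neg_le_neg hx)

noncomputable def tailEnvelope (C r x : ℝ) : ℝ := min 1 (C * (1 + |x|) ^ r)

lemma tailEnvelope_nonneg {C : ℝ} (hC : 0 ≤ C) (r x : ℝ) : 0 ≤ tailEnvelope C r x :=
  le_min zero_le_one (by positivity)

lemma measurable_tailEnvelope (C r : ℝ) : Measurable (tailEnvelope C r) := by
  unfold tailEnvelope; fun_prop

lemma abs_signedTail_le_one {H : ℝ → ℝ} {t : ℝ} (hH : 0 ≤ H t ∧ H t ≤ 1) :
    |signedTail H t| ≤ 1 := by
  rcases le_or_gt 0 t with ht | ht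
  · rw [abs_signedTail_of_nonneg hH.2 ht]; linarith [hH.1]
  · rw [abs_signedTail_of_neg hH.1 ht]; exact hH.2

lemma abs_signedTail_le_tailEnvelope {H : ℝ → ℝ} (h01 : ∀ x, 0 ≤ H x ∧ H x ≤ 1)
    {C r p q : ℝ} (hr : r ≤ 0) (hC : 1 ≤ C * (1 + max |p| |q|) ^ r)
    (hleft : ∀ x ≤ p, H x ≤ C * (1 + |x|) ^ r)
    (hright : ∀ x, q ≤ x → 1 - H x ≤ C * (1 + |x|) ^ r) (t : ℝ) :
    |signedTail H t| ≤ tailEnvelope C r t := by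
  refine le_min (abs_signedTail_le_one (h01 t)) ?_
  rcases le_or_gt |t| (max |p| |q|) with hm | hm
  · have hC0 : 0 < C := pos_of_mul_pos_left (zero_lt_one.trans_le hC) (by positivity)
    calc |signedTail H t| ≤ 1 := abs_signedTail_le_one (h01 t)
      _ ≤ C * (1 + max |p| |q|) ^ r := hC
      _ ≤ C * (1 + |t|) ^ r :=
          mul_le_mul_of_nonneg_left
            (Real.rpow_le_rpow_of_nonpos (by positivity) (by linarith) hr) hC0.le
  rcases le_or_gt 0 t with ht | ht
  · rw [abs_signedTail_of_nonneg (h01 t).2 ht]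
    exact hright t (by linarith [le_abs_self q, le_max_right |p| |q|, abs_of_nonneg ht])
  · rw [abs_signedTail_of_neg (h01 t).1 ht]
    exact hleft t (by linarith [neg_abs_le p, le_max_left |p| |q|, abs_of_neg ht])

lemma exists_uniform_tailEnvelope {s p q α β : ℝ} (hs : s < 0) (hpq : p < q) (hα : 0 < α)
    (hαβ : α < β) (hβ : β < 1) :
    ∃ C ≥ 0, ∀ H : ℝ → ℝ, IsDistFun H → IsBiSStarConcave s H → 0 < H p → H p ≤ α →
      β ≤ H q → H q < 1 → ∀ t, |signedTail H t| ≤ tailEnvelope C s⁻¹ t := by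
  obtain ⟨CL, hCL⟩ := exists_left_tail_bound hs hpq hα hαβ
  obtain ⟨CR, hCR⟩ := exists_right_tail_bound hs hpq hαβ hβ
  set m := 1 + max |p| |q|
  have hm : 0 < m := by positivity
  set C := max (max CL CR) (m ^ (-s⁻¹))
  refine ⟨C, (Real.rpow_pos_of_pos hm _).le.trans (le_max_right _ _),
    fun H hH hHbi hHp0 hHp hHq hHq1 => abs_signedTail_le_tailEnvelope (p := p) (q := q) hH.2.1
      (inv_nonpos.2 hs.le) ?_ (fun x hx => ?_) (fun x hx => ?_)⟩
  · calc 1 = m ^ (-s⁻¹) * m ^ s⁻¹ := by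
          rw [Real.rpow_neg hm.le, inv_mul_cancel₀ (by positivity)]
      _ ≤ C * m ^ s⁻¹ := by gcongr; exact le_max_right _ _
  · exact (hCL H hH.1 hH.2.1 (hHbi.2.1 hs).1 hHp hHq hHq1 x hx).trans
      (by gcongr; exact (le_max_left _ _).trans (le_max_left _ _))
  · exact (hCR H hH.1 hH.2.1 (hHbi.2.1 hs).2 hHp0 hHp hHq x hx).trans
      (by gcongr; exact (le_max_right _ _).trans (le_max_left _ _))

lemma integrable_abs_rpow_mul_tailEnvelope {k r C : ℝ} (hk : 0 < k) (hkr : k + r < 0)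
    (hC : 0 ≤ C) : Integrable fun x => |x| ^ (k - 1) * tailEnvelope C r x := by
  set f := fun x : ℝ => |x| ^ (k - 1) * tailEnvelope C r x with hf
  have hmeas : AEStronglyMeasurable f := (measurable_abs.pow_const _).mul
    (measurable_tailEnvelope C r) |>.aestronglyMeasurable
  have hnorm : ∀ x, ‖f x‖ = f x := fun x =>
    Real.norm_of_nonneg (mul_nonneg (by positivity) (tailEnvelope_nonneg hC r x))
  have hnear : IntegrableOn f (Ioc 0 1) := by
    refine Integrable.mono' ((intervalIntegrable_iff_integrableOn_Ioc_of_le zero_le_one).1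
      (intervalIntegral.intervalIntegrable_rpow' (r := k - 1) (by linarith))) hmeas.restrict
      (ae_restrict_of_forall_mem measurableSet_Ioc fun x hx => ?_)
    rw [hnorm, hf]; dsimp only; rw [abs_of_pos hx.1]
    exact mul_le_of_le_one_right (Real.rpow_nonneg hx.1.le _) (min_le_left _ _)
  have hfar : IntegrableOn f (Ioi 1) := by
    refine Integrable.mono' ((integrableOn_Ioi_rpow_of_lt (by linarith : k - 1 + r < -1)
      one_pos).const_mul C) hmeas.restrict
      (ae_restrict_of_forall_mem measurableSet_Ioi fun x (hx : 1 < x) => ?_)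
    have hx0 : 0 < x := zero_lt_one.trans hx
    rw [hnorm, hf]; dsimp only; rw [abs_of_pos hx0, Real.rpow_add hx0]
    have hr : r ≤ 0 := by linarith
    calc x ^ (k - 1) * tailEnvelope C r x ≤ x ^ (k - 1) * (C * x ^ r) :=
          mul_le_mul_of_nonneg_left ((min_le_right _ _).trans (mul_le_mul_of_nonneg_left
            (Real.rpow_le_rpow_of_nonpos hx0 (by linarith [le_abs_self x]) hr) hC))
            (Real.rpow_nonneg hx0.le _)
      _ = C * (x ^ (k - 1) * x ^ r) := by ring
  have hpos : IntegrableOn f (Ici 0) := by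
    rw [integrableOn_Ici_iff_integrableOn_Ioi, ← Ioc_union_Ioi_eq_Ioi zero_le_one]
    exact hnear.union hfar
  have hneg : IntegrableOn f (Iic 0) := by
    have h := (neg_zero (G := ℝ) ▸ hpos).comp_neg_Iic (c := 0)
    simpa only [hf, tailEnvelope, abs_neg] using h
  rw [← integrableOn_univ, ← Iic_union_Ici (a := (0 : ℝ))]
  exact hneg.union hpos

lemma integrable_abs_mul_tailEnvelope {φ' : ℝ → ℝ} {a k r C : ℝ} (hφ' : Measurable φ')
    (hbd : ∀ x : ℝ, x ≠ 0 → |φ' x| ≤ a * |x| ^ (k - 1)) (hk : 0 < k) (hkr : k + r < 0)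
    (hC : 0 ≤ C) : Integrable fun t => |φ' t| * tailEnvelope C r t := by
  refine ((integrable_abs_rpow_mul_tailEnvelope hk hkr hC).const_mul a).mono'
    (hφ'.abs.mul (measurable_tailEnvelope C r)).aestronglyMeasurable
    ((Measure.ae_ne volume 0).mono fun t ht => ?_)
  rw [Real.norm_of_nonneg (mul_nonneg (abs_nonneg _) (tailEnvelope_nonneg hC r t)), ← mul_assoc]
  exact mul_le_mul_of_nonneg_right (hbd t ht) (tailEnvelope_nonneg hC r t)

section RefinedBand

variable {s : ℝ} {L U : ℝ → ℝ} {x b : ℝ}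

lemma le_refinedLower (hb : b ≤ 1)
    (h : ∀ H, IsDistFun H → IsBiSStarConcave s H → (∀ z, L z ≤ H z ∧ H z ≤ U z) → b ≤ H x) :
    b ≤ refinedLower s L U x := by
  refine le_csInf ⟨1, Or.inl rfl⟩ ?_
  rintro y (rfl | ⟨H, hH, hHbi, hfit, rfl⟩)
  exacts [hb, h H hH hHbi hfit]

lemma refinedUpper_le (hb : 0 ≤ b)
    (h : ∀ H, IsDistFun H → IsBiSStarConcave s H → (∀ z, L z ≤ H z ∧ H z ≤ U z) → H x ≤ b) :
    refinedUpper s L U x ≤ b := by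
  refine Real.sSup_le ?_ hb
  rintro y (rfl | ⟨H, hH, hHbi, hfit, rfl⟩)
  exacts [hb, h H hH hHbi hfit]

lemma le_and_le_of_refined {G : ℝ → ℝ} (hL : L x ≤ 1) (hU : 0 ≤ U x)
    (hsand : refinedLower s L U x ≤ G x ∧ G x ≤ refinedUpper s L U x) :
    L x ≤ G x ∧ G x ≤ U x :=
  ⟨(le_refinedLower hL fun _ _ _ hfit => (hfit x).1).trans hsand.1,
    hsand.2.trans (refinedUpper_le hU fun _ _ _ hfit => (hfit x).2)⟩

lemma abs_signedTail_le_of_refined {G : ℝ → ℝ} {t w : ℝ} (hG : 0 ≤ G t ∧ G t ≤ 1) (hw : 0 ≤ w)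
    (hsand : refinedLower s L U t ≤ G t ∧ G t ≤ refinedUpper s L U t)
    (h : ∀ H, IsDistFun H → IsBiSStarConcave s H → (∀ z, L z ≤ H z ∧ H z ≤ U z) →
      |signedTail H t| ≤ w) :
    |signedTail G t| ≤ w := by
  rcases le_or_gt 0 t with ht | ht
  · have : 1 - w ≤ refinedLower s L U t := le_refinedLower (by linarith) fun H hH hHbi hfit => by
      have := h H hH hHbi hfit
      rw [abs_signedTail_of_nonneg (hH.2.1 t).2 ht] at this
      linarith
    rw [abs_signedTail_of_nonneg hG.2 ht]
    linarith [hsand.1]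
  · rw [abs_signedTail_of_neg hG.1 ht]
    refine hsand.2.trans (refinedUpper_le hw fun H hH hHbi hfit => ?_)
    simpa only [abs_signedTail_of_neg (hH.2.1 t).1 ht] using h H hH hHbi hfit

end RefinedBand

lemma eventually_abs_signedTail_le_of_refined {s p q α β : ℝ} {F W : ℝ → ℝ}
    {L U : ℕ → ℝ → ℝ} (hW0 : ∀ t, 0 ≤ W t)
    (hW : ∀ H, IsDistFun H → IsBiSStarConcave s H → 0 < H p → H p ≤ α → β ≤ H q → H q < 1 →
      ∀ t, |signedTail H t| ≤ W t)
    (hLp : Tendsto (fun n => L n p) atTop (nhds (F p)))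
    (hUp : Tendsto (fun n => U n p) atTop (nhds (F p)))
    (hLq : Tendsto (fun n => L n q) atTop (nhds (F q)))
    (hUq : Tendsto (fun n => U n q) atTop (nhds (F q)))
    (hp0 : 0 < F p) (hpα : F p < α) (hβq : β < F q) (hq1 : F q < 1) :
    ∀ᶠ n in atTop, ∀ G : ℝ → ℝ, (∀ x, 0 ≤ G x ∧ G x ≤ 1) →
      (∀ x, refinedLower s (L n) (U n) x ≤ G x ∧ G x ≤ refinedUpper s (L n) (U n) x) →
        ∀ t, |signedTail G t| ≤ W t := by
  filter_upwards [hLp.eventually_const_lt hp0, hUp.eventually_le_const hpα,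
    hLq.eventually_const_le hβq, hUq.eventually_lt_const hq1] with n hLp hUp hLq hUq G hG hsand t
  exact abs_signedTail_le_of_refined (hG t) (hW0 t) (hsand t) fun H hH hHbi hfit =>
    hW H hH hHbi (hLp.trans_le (hfit p).1) ((hfit p).2.trans hUp) (hLq.trans (hfit q).1)
      ((hfit q).2.trans_lt hUq) t

lemma tendsto_integral_mul_min_nhds_zero {α : Type*} [MeasurableSpace α] {μ : Measure α}
    {ρ W : α → ℝ} {d : ℕ → α → ℝ} (hρ : ∀ x, 0 ≤ ρ x) (hW : ∀ x, 0 ≤ W x)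
    (hd : ∀ n x, 0 ≤ d n x) (hρW : Integrable (fun x => ρ x * W x) μ)
    (hmeas : ∀ n, AEStronglyMeasurable (fun x => ρ x * min (d n x) (W x)) μ)
    (hlim : ∀ x, Tendsto (fun n => d n x) atTop (nhds 0)) :
    Tendsto (fun n => ∫ x, ρ x * min (d n x) (W x) ∂μ) atTop (nhds 0) := by
  have hbound : ∀ n, ∀ᵐ x ∂μ, ‖ρ x * min (d n x) (W x)‖ ≤ ρ x * W x := fun n =>
    ae_of_all _ fun x => by
      rw [Real.norm_of_nonneg (mul_nonneg (hρ x) (le_min (hd n x) (hW x)))]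
      exact mul_le_mul_of_nonneg_left (min_le_right _ _) (hρ x)
  have hpt : ∀ᵐ x ∂μ, Tendsto (fun n => ρ x * min (d n x) (W x)) atTop (nhds 0) :=
    ae_of_all _ fun x => by
      simpa [min_eq_left (hW x)] using
        ((hlim x).min (tendsto_const_nhds (x := W x))).const_mul (ρ x)
  simpa using tendsto_integral_of_dominated_convergence _ hmeas hρW hbound hpt

/-- Dominated convergence is applied to `ρ * min (|U n - F| + |F - L n|) W`, which majorizes
`ρ * |G - F|` for every admissible `G` at once. -/
lemma eventually_integral_mul_abs_sub_le {α : Type*} [MeasurableSpace α] {μ : Measure α}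
    {ρ W F : α → ℝ} {L U : ℕ → α → ℝ} (hρ : Measurable ρ) (hρ0 : ∀ x, 0 ≤ ρ x)
    (hW : Measurable W) (hW0 : ∀ x, 0 ≤ W x) (hρW : Integrable (fun x => ρ x * W x) μ)
    (hF : Measurable F) (hL : ∀ n, Measurable (L n)) (hU : ∀ n, Measurable (U n))
    (hLconv : ∀ x, Tendsto (fun n => L n x) atTop (nhds (F x)))
    (hUconv : ∀ x, Tendsto (fun n => U n x) atTop (nhds (F x))) {ε : ℝ} (hε : 0 < ε) :
    ∀ᶠ n in atTop, ∀ G : α → ℝ, (∀ x, L n x ≤ G x ∧ G x ≤ U n x) →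
      (∀ x, |G x - F x| ≤ W x) → ∫ x, ρ x * |G x - F x| ∂μ ≤ ε := by
  set d : ℕ → α → ℝ := fun n x => |U n x - F x| + |F x - L n x|
  have hd0 : ∀ n x, 0 ≤ d n x := fun _ _ => add_nonneg (abs_nonneg _) (abs_nonneg _)
  have hint : ∀ n, Integrable (fun x => ρ x * min (d n x) (W x)) μ := fun n =>
    hρW.mono' (hρ.mul ((((hU n).sub hF).abs.add (hF.sub (hL n)).abs).min hW)).aestronglyMeasurable
      (ae_of_all _ fun x => by
        rw [Real.norm_of_nonneg (mul_nonneg (hρ0 x) (le_min (hd0 n x) (hW0 x)))]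
        exact mul_le_mul_of_nonneg_left (min_le_right _ _) (hρ0 x))
  have hlim := tendsto_integral_mul_min_nhds_zero hρ0 hW0 hd0 hρW
    (fun n => (hint n).aestronglyMeasurable) fun x => by
      simpa using ((hUconv x).sub_const (F x)).abs.add ((hLconv x).const_sub (F x)).abs
  filter_upwards [hlim.eventually_le_const hε] with n hn G hband hGW
  refine (integral_mono_of_nonneg (ae_of_all _ fun x => mul_nonneg (hρ0 x) (abs_nonneg _)) (hint n)
    (ae_of_all _ fun x => mul_le_mul_of_nonneg_left (le_min ?_ (hGW x)) (hρ0 x))).trans hn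
  obtain ⟨hLG, hGU⟩ := hband x
  show |G x - F x| ≤ |U n x - F x| + |F x - L n x|
  rw [abs_le]
  constructor <;> linarith [le_abs_self (U n x - F x), le_abs_self (F x - L n x),
    abs_nonneg (U n x - F x), abs_nonneg (F x - L n x)]

lemma integrable_deriv_mul_signedTail {G φ' W : ℝ → ℝ} (hG : Monotone G) (hφ' : Measurable φ')
    (hW : Integrable fun t => |φ' t| * W t) (hGW : ∀ t, |signedTail G t| ≤ W t) :
    Integrable fun t => φ' t * signedTail G t := by
  refine hW.mono' (hφ'.mul ?_).aestronglyMeasurable (ae_of_all _ fun t => ?_)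
  · exact Measurable.ite (measurableSet_le measurable_const measurable_id)
      (measurable_const.sub hG.measurable) hG.measurable.neg
  · rw [Real.norm_eq_abs, abs_mul]
    exact mul_le_mul_of_nonneg_left (hGW t) (abs_nonneg _)

theorem integrable_and_abs_integral_sub_le {F G φ φ' W : ℝ → ℝ} {μF μG : Measure ℝ}
    [IsProbabilityMeasure μF] [IsProbabilityMeasure μG]
    (hF : Monotone F) (hF01 : ∀ x, 0 ≤ F x ∧ F x ≤ 1) (hG : Monotone G)
    (hG01 : ∀ x, 0 ≤ G x ∧ G x ≤ 1) (hμF : ∀ x, μF (Iic x) = ENNReal.ofReal (F x))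
    (hμG : ∀ x, μG (Iic x) = ENNReal.ofReal (G x))
    (hφ : ∀ x, HasDerivAt φ (φ' x) x) (hφ' : Continuous φ')
    (hW : Integrable fun t => |φ' t| * W t)
    (hFW : ∀ t, |signedTail F t| ≤ W t) (hGW : ∀ t, |signedTail G t| ≤ W t) :
    Integrable φ μG ∧ |∫ x, φ x ∂μG - ∫ x, φ x ∂μF| ≤ ∫ t, |φ' t| * |G t - F t| := by
  have hFint := integrable_deriv_mul_signedTail hF hφ'.measurable hW hFW
  have hGint := integrable_deriv_mul_signedTail hG hφ'.measurable hW hGW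
  obtain ⟨-, hFeq⟩ :=
    integrable_and_integral_eq_add_integral_deriv_mul_signedTail hF01 hμF hφ hφ' hFint
  obtain ⟨hφG, hGeq⟩ :=
    integrable_and_integral_eq_add_integral_deriv_mul_signedTail hG01 hμG hφ hφ' hGint
  refine ⟨hφG, ?_⟩
  rw [hGeq, hFeq, add_sub_add_left_eq_sub, ← integral_sub hGint hFint]
  refine abs_integral_le_integral_abs.trans_eq (integral_congr_ae (ae_of_all _ fun t => ?_))
  have hdiff : signedTail G t - signedTail F t = F t - G t := by
    unfold signedTail; split_ifs <;> ring
  simp only [← mul_sub, hdiff, abs_mul, abs_sub_comm]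

lemma NonDeg.exists_lt_lt {F : ℝ → ℝ} (hnd : NonDeg F) (hmono : Monotone F)
    (hF0 : Tendsto F atBot (nhds 0)) (hc : Continuous F) :
    ∃ p q, 0 < F p ∧ F p < F q ∧ F q < 1 := by
  obtain ⟨q, hq0, hq1⟩ := hnd
  obtain ⟨p₀, hp₀⟩ := (hF0.eventually_lt_const (half_pos hq0)).exists
  have hp₀q : p₀ ≤ q := (hmono.reflect_lt (hp₀.trans (half_lt_self hq0))).le
  obtain ⟨p, -, hp⟩ :=
    intermediate_value_Icc hp₀q hc.continuousOn ⟨hp₀.le, (half_lt_self hq0).le⟩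
  exact ⟨p, q, hp ▸ half_pos hq0, hp ▸ half_lt_self hq0, hq1⟩

theorem refined_band_functional_consistency_general
    (s : ℝ) (hs : s < 0)
    (F : ℝ → ℝ) (hF : IsDistFun F) (hnd : NonDeg F)
    (hbi : IsBiSStarConcave s F)
    (μF : Measure ℝ) (hμF : ∀ x, μF (Iic x) = ENNReal.ofReal (F x))
    (L U : ℕ → ℝ → ℝ)
    (hLmono : ∀ n, Monotone (L n)) (hUmono : ∀ n, Monotone (U n))
    (hL01 : ∀ n x, 0 ≤ L n x ∧ L n x ≤ 1) (hU01 : ∀ n x, 0 ≤ U n x ∧ U n x ≤ 1)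
    (hLconv : ∀ x, Tendsto (fun n => L n x) atTop (nhds (F x)))
    (hUconv : ∀ x, Tendsto (fun n => U n x) atTop (nhds (F x)))
    (φ φ' : ℝ → ℝ) (hφ : ∀ x, HasDerivAt φ (φ' x) x) (hφ'cont : Continuous φ')
    (a k : ℝ) (hk0 : 0 < k) (hk : k < -1 / s)
    (hφ'bd : ∀ x : ℝ, x ≠ 0 → |φ' x| ≤ a * |x| ^ (k - 1)) :
    ∀ ε > (0 : ℝ), ∃ N : ℕ, ∀ n ≥ N,
      ∀ G : ℝ → ℝ, IsDistFun G →
        (∀ x, refinedLower s (L n) (U n) x ≤ G x ∧ G x ≤ refinedUpper s (L n) (U n) x) →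
        ∀ μG : Measure ℝ, (∀ x, μG (Iic x) = ENNReal.ofReal (G x)) →
          Integrable φ μG ∧ |∫ x, φ x ∂μG - ∫ x, φ x ∂μF| ≤ ε := by
  intro ε hε
  have := isProbabilityMeasure_of_measure_Iic hF.2.2.2.2 hμF
  obtain ⟨p, q, hp0, hpq, hq1⟩ := hnd.exists_lt_lt hF.1 hF.2.2.2.1 hbi.1
  obtain ⟨α, hpα, hαq⟩ := exists_between hpq
  obtain ⟨β, hαβ, hβq⟩ := exists_between hαq
  obtain ⟨C, hC0, hC⟩ := exists_uniform_tailEnvelope hs (hF.1.reflect_lt hpq) (hp0.trans hpα)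
    hαβ (hβq.trans hq1)
  have hW := integrable_abs_mul_tailEnvelope (r := s⁻¹) hφ'cont.measurable hφ'bd hk0
    (by rw [neg_div, one_div] at hk; linarith) hC0
  have hFW := hC F hF hbi hp0 hpα.le hβq.le hq1
  obtain ⟨N, hN⟩ := eventually_atTop.1 ((eventually_abs_signedTail_le_of_refined
    (tailEnvelope_nonneg hC0 _) hC (hLconv p) (hUconv p) (hLconv q) (hUconv q) hp0 hpα hβq hq1).and
    (eventually_integral_mul_abs_sub_le hφ'cont.measurable.abs (fun _ => abs_nonneg _)
      (measurable_tailEnvelope C _) (tailEnvelope_nonneg hC0 _) hW hF.1.measurable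
      (fun n => (hLmono n).measurable) (fun n => (hUmono n).measurable) hLconv hUconv hε))
  refine ⟨N, fun n hn G hG hsand μG hμG => ?_⟩
  have := isProbabilityMeasure_of_measure_Iic hG.2.2.2.2 hμG
  have hGW := (hN n hn).1 G hG.2.1 hsand
  obtain ⟨hφG, hdiff⟩ := integrable_and_abs_integral_sub_le hF.1 hF.2.1 hG.1 hG.2.1 hμF hμG hφ
    hφ'cont hW hFW hGW
  exact ⟨hφG, hdiff.trans ((hN n hn).2 G
    (fun x => le_and_le_of_refined (hL01 n x).2 (hU01 n x).1 (hsand x))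
    fun t => abs_sub_le_of_abs_signedTail_le (hF.2.1 t) (hG.2.1 t) (hFW t) (hGW t))⟩

/-- Corollary 8, deterministic core: let `s* < 0`, `F` a non-degenerate
bi-`s*`-concave distribution function with Lebesgue–Stieltjes measure `μF`, `L n`, `U n`
nondecreasing `[0,1]`-valued functions converging pointwise to `F`, and `φ` a `C¹` function
with `|φ'(x)| ≤ a |x|^{k-1}` for `x ≠ 0`, where `0 < k < -1/s*`. Then for all sufficiently
large `n`, `φ` is integrable with respect to the Lebesgue–Stieltjes measure of every
distribution function `G` sandwiched between the refined bands `L^o_n` and `U^o_n`, and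
`sup_G |∫ φ dG − ∫ φ dF| → 0`. -/
theorem refined_band_functional_consistency
    (s : ℝ) (hs : s < 0)
    (F : ℝ → ℝ) (hF : IsDistFun F) (hnd : NonDeg F)
    (hbi : IsBiSStarConcave s F)
    (μF : Measure ℝ) (hμF : ∀ x, μF (Iic x) = ENNReal.ofReal (F x))
    (L U : ℕ → ℝ → ℝ)
    (hLmono : ∀ n, Monotone (L n)) (hUmono : ∀ n, Monotone (U n))
    (hL01 : ∀ n x, 0 ≤ L n x ∧ L n x ≤ 1) (hU01 : ∀ n x, 0 ≤ U n x ∧ U n x ≤ 1)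
    (hLconv : ∀ x, Tendsto (fun n => L n x) atTop (nhds (F x)))
    (hUconv : ∀ x, Tendsto (fun n => U n x) atTop (nhds (F x)))
    (φ φ' : ℝ → ℝ) (hφ : ∀ x, HasDerivAt φ (φ' x) x) (hφ'cont : Continuous φ')
    (a k : ℝ) (ha : 0 < a) (hk0 : 0 < k) (hk : k < -1 / s)
    (hφ'bd : ∀ x : ℝ, x ≠ 0 → |φ' x| ≤ a * |x| ^ (k - 1)) :
    ∀ ε > (0 : ℝ), ∃ N : ℕ, ∀ n ≥ N,
      ∀ G : ℝ → ℝ, IsDistFun G →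
        (∀ x, refinedLower s (L n) (U n) x ≤ G x ∧ G x ≤ refinedUpper s (L n) (U n) x) →
        ∀ μG : Measure ℝ, (∀ x, μG (Iic x) = ENNReal.ofReal (G x)) →
          Integrable φ μG ∧ |∫ x, φ x ∂μG - ∫ x, φ x ∂μF| ≤ ε :=
  refined_band_functional_consistency_general s hs F hF hnd hbi μF hμF L U hLmono hUmono hL01 hU01
    hLconv hUconv φ φ' hφ hφ'cont a k hk0 hk hφ'bd
end
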